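/- arXiv:2012.14095 — 6 statements merged into one kernel-verified Lean document; each statement's English description precedes it below -/
import Mathlib

section
/- Let n ≥ 1 and m ≥ 1 be naturals, let X be the type of Boolean strings of length n, and let F be a nonempty finite set of functions X → Bool. Let D_F be the consistency distinguisher for F. Then: (i) the probability, over a uniformly random z : Fin m → X × Bool, that D_F(z) = true is at least 1 − |F|/2^m; (ii) for every f ∈ F and every x : Fin m → X, D_F applied to the sample list with i-th entry (x i, f (x i)) equals false; consequently (iii) for every f ∈ F, P_0(f, D_F) − P_m(f, D_F) ≥ 1 − |F|/2^m. In particular, if 2·|F| ≤ 2^m then the consistency distinguisher has distinguishing gap at least 1/2 against every f ∈ F. -/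
/-!
A sample list `z : Fin m → X × Bool` is consistent with `f` only if every label is `f` of its
point, so exactly `|X|^m` of the `|X|^m 2^m` sample lists are consistent with a given `f`. By the
union bound a uniformly random sample list is consistent with some member of `F` with probability
at most `|F| / 2^m`, so `D_F` accepts it with probability at least `1 - |F| / 2^m`. Sample lists
labelled by a member of `F` are consistent with it, so `D_F` never accepts them: `P_m = 0`, while
`P_0` is the acceptance probability on uniform samples.
-/

open scoped Classical

noncomputable def pr {α : Type*} [Fintype α] (p : α → Prop) : ℝ :=
  ((Finset.univ.filter p).card : ℝ) / (Fintype.card α)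

def hybSample {n m : ℕ} (f : (Fin n → Bool) → Bool) (i : ℕ)
    (x : Fin m → (Fin n → Bool)) (r : Fin m → Bool) :
    Fin m → (Fin n → Bool) × Bool :=
  fun j => if (j : ℕ) < i then (x j, f (x j)) else (x j, r j)

/-- The hybrid probability `P_i(f, D)`. -/
noncomputable def hybProb {n m : ℕ} (f : (Fin n → Bool) → Bool)
    (D : (Fin m → (Fin n → Bool) × Bool) → Bool) (i : ℕ) : ℝ :=
  pr (fun p : (Fin m → (Fin n → Bool)) × (Fin m → Bool) =>
    D (hybSample f i p.1 p.2) = true)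

/-- The consistency distinguisher `D_F`. -/
noncomputable def consistencyDistinguisher {n m : ℕ}
    (F : Finset ((Fin n → Bool) → Bool)) (z : Fin m → (Fin n → Bool) × Bool) : Bool :=
  decide (¬ ∃ f ∈ F, ∀ i : Fin m, (z i).2 = f ((z i).1))

section UniformProbability

variable {α β : Type*} [Fintype α] [Fintype β]

lemma pr_congr {p q : α → Prop} (h : ∀ a, p a ↔ q a) : pr p = pr q :=
  congrArg pr (funext fun a => propext (h a))

lemma pr_false : pr (fun _ : α => False) = 0 := by
  simp [pr]

lemma pr_not [Nonempty α] (p : α → Prop) : pr (fun a => ¬ p a) = 1 - pr p := by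
  have hcard : (Fintype.card α : ℝ) ≠ 0 := by positivity
  rw [eq_sub_iff_add_eq, pr, pr, ← add_div, div_eq_one_iff_eq hcard, ← Nat.cast_add,
    add_comm, Finset.card_filter_add_card_filter_not, Finset.card_univ]

lemma pr_comp_equiv (e : α ≃ β) (p : β → Prop) : pr (fun a => p (e a)) = pr p := by
  simp only [pr, ← Fintype.card_subtype, Fintype.card_congr e]
  congr 2
  exact Fintype.card_congr (e.subtypeEquiv fun _ => Iff.rfl)

end UniformProbability

section Consistency

variable {ι α β : Type*}

def IsConsistent (f : α → β) (z : ι → α × β) : Prop :=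
  ∀ i, (z i).2 = f (z i).1

def arrowEquivIsConsistent (f : α → β) : (ι → α) ≃ {z : ι → α × β // IsConsistent f z} where
  toFun x := ⟨fun i => (x i, f (x i)), fun _ => rfl⟩
  invFun z i := (z.1 i).1
  left_inv _ := rfl
  right_inv z := Subtype.ext <| funext fun i => Prod.ext rfl (z.2 i).symm

variable [Fintype ι] [DecidableEq ι] [Fintype α] [Fintype β]

lemma card_filter_isConsistent (f : α → β) :
    (Finset.univ.filter (IsConsistent (ι := ι) f)).card = Fintype.card α ^ Fintype.card ι := by
  rw [← Fintype.card_subtype, ← Fintype.card_congr (arrowEquivIsConsistent f), Fintype.card_fun]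

lemma pr_exists_isConsistent_le (F : Finset (α → β)) :
    pr (fun z : ι → α × β => ∃ f ∈ F, IsConsistent f z)
      ≤ (F.card : ℝ) / Fintype.card β ^ Fintype.card ι := by
  have hunion : (Finset.univ.filter fun z : ι → α × β => ∃ f ∈ F, IsConsistent f z).card
      ≤ F.card * Fintype.card α ^ Fintype.card ι := by
    calc _ = (F.biUnion fun f => Finset.univ.filter (IsConsistent (ι := ι) f)).card := by
          congr 1; ext z; simp
      _ ≤ ∑ f ∈ F, (Finset.univ.filter (IsConsistent (ι := ι) f)).card := Finset.card_biUnion_le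
      _ = F.card * Fintype.card α ^ Fintype.card ι := by
          simp only [card_filter_isConsistent, Finset.sum_const, smul_eq_mul]
  calc pr (fun z : ι → α × β => ∃ f ∈ F, IsConsistent f z)
      ≤ F.card * Fintype.card α ^ Fintype.card ι
          / (Fintype.card α ^ Fintype.card ι * Fintype.card β ^ Fintype.card ι) := by
        rw [pr, Fintype.card_fun, Fintype.card_prod, mul_pow]
        push_cast
        gcongr
        norm_cast
        -- `pr` filters with the classical decidability instance
        convert hunion
    _ = F.card / Fintype.card β ^ Fintype.card ι
          * (Fintype.card α ^ Fintype.card ι / Fintype.card α ^ Fintype.card ι) := by ring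
    _ ≤ F.card / Fintype.card β ^ Fintype.card ι :=
        mul_le_of_le_one_right (by positivity) (div_self_le_one _)

end Consistency

section Hybrid

variable {n m : ℕ} (f : (Fin n → Bool) → Bool) (D : (Fin m → (Fin n → Bool) × Bool) → Bool)

lemma hybProb_zero :
    hybProb f D 0 = pr (fun z : Fin m → (Fin n → Bool) × Bool => D z = true) := by
  rw [hybProb, ← pr_comp_equiv (Equiv.arrowProdEquivProdArrow (Fin m) _ _).symm]
  rfl

lemma hybSample_length (x : Fin m → Fin n → Bool) (r : Fin m → Bool) :
    hybSample f m x r = fun j => (x j, f (x j)) :=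
  funext fun j => if_pos j.isLt

lemma hybProb_length_eq_zero
    (hD : ∀ x : Fin m → Fin n → Bool, D (fun j => (x j, f (x j))) = false) :
    hybProb f D m = 0 := by
  rw [hybProb, ← pr_false (α := (Fin m → Fin n → Bool) × (Fin m → Bool))]
  exact pr_congr fun p => by simp [hybSample_length, hD]

end Hybrid

lemma consistencyDistinguisher_eq_true_iff {n m : ℕ} (F : Finset ((Fin n → Bool) → Bool))
    (z : Fin m → (Fin n → Bool) × Bool) :
    consistencyDistinguisher F z = true ↔ ¬ ∃ f ∈ F, IsConsistent f z := by
  simp [consistencyDistinguisher, IsConsistent]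

theorem stmt0_general {n m : ℕ}
    (F : Finset ((Fin n → Bool) → Bool)) :
    (pr (fun z : Fin m → (Fin n → Bool) × Bool =>
        consistencyDistinguisher F z = true) ≥ 1 - (F.card : ℝ) / 2 ^ m) ∧
    (∀ f ∈ F, ∀ x : Fin m → (Fin n → Bool),
        consistencyDistinguisher F (fun i => (x i, f (x i))) = false) ∧
    (∀ f ∈ F,
        hybProb f (consistencyDistinguisher (m := m) F) 0
          - hybProb f (consistencyDistinguisher (m := m) F) m
          ≥ 1 - (F.card : ℝ) / 2 ^ m) ∧
    (2 * F.card ≤ 2 ^ m → ∀ f ∈ F,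
        hybProb f (consistencyDistinguisher (m := m) F) 0
          - hybProb f (consistencyDistinguisher (m := m) F) m ≥ 1 / 2) := by
  have hrandom : pr (fun z : Fin m → (Fin n → Bool) × Bool =>
      consistencyDistinguisher F z = true) ≥ 1 - (F.card : ℝ) / 2 ^ m := by
    have hbad := pr_exists_isConsistent_le (ι := Fin m) F
    simp only [Fintype.card_bool, Fintype.card_fin, Nat.cast_ofNat] at hbad
    rw [pr_congr (consistencyDistinguisher_eq_true_iff F), pr_not]
    linarith
  have hlabelled : ∀ f ∈ F, ∀ x : Fin m → (Fin n → Bool),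
      consistencyDistinguisher F (fun i => (x i, f (x i))) = false := fun f hf x => by
    rw [← Bool.not_eq_true, consistencyDistinguisher_eq_true_iff, not_not]
    exact ⟨f, hf, fun _ => rfl⟩
  have hgap : ∀ f ∈ F, hybProb f (consistencyDistinguisher (m := m) F) 0
      - hybProb f (consistencyDistinguisher (m := m) F) m ≥ 1 - (F.card : ℝ) / 2 ^ m :=
    fun f hf => by
      rwa [hybProb_zero, hybProb_length_eq_zero f _ (hlabelled f hf), sub_zero]
  refine ⟨hrandom, hlabelled, hgap, fun hF f hf => (hgap f hf).trans' ?_⟩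
  have hF' : (2 * F.card : ℝ) ≤ 2 ^ m := by exact_mod_cast hF
  have hratio : (F.card : ℝ) / 2 ^ m ≤ 1 / 2 := by
    rw [div_le_iff₀ (by positivity)]
    linarith
  linarith

theorem stmt0 {n m : ℕ} (hn : 1 ≤ n) (hm : 1 ≤ m)
    (F : Finset ((Fin n → Bool) → Bool)) (hF : F.Nonempty) :
    (pr (fun z : Fin m → (Fin n → Bool) × Bool =>
        consistencyDistinguisher F z = true) ≥ 1 - (F.card : ℝ) / 2 ^ m) ∧
    (∀ f ∈ F, ∀ x : Fin m → (Fin n → Bool),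
        consistencyDistinguisher F (fun i => (x i, f (x i))) = false) ∧
    (∀ f ∈ F,
        hybProb f (consistencyDistinguisher (m := m) F) 0
          - hybProb f (consistencyDistinguisher (m := m) F) m
          ≥ 1 - (F.card : ℝ) / 2 ^ m) ∧
    (2 * F.card ≤ 2 ^ m → ∀ f ∈ F,
        hybProb f (consistencyDistinguisher (m := m) F) 0
          - hybProb f (consistencyDistinguisher (m := m) F) m ≥ 1 / 2) :=
  stmt0_general F
end

section
/- (Probabilistic content of Lemma 4, Blum–Furst–Kearns–Lipton.) Let n ≥ 1 and m ≥ 1 be naturals, let s ≥ 1 be a real number, let X be the type of Boolean strings of length n, let f : X → Bool, and let D : (Fin m → X × Bool) → Bool satisfy P_0(f,D) − P_m(f,D) ≥ 1/s. Then, with probability at least 1/(2·m²·s) over a uniformly random triple (i, r, x) ∈ Fin m × (Fin m → Bool) × (Fin m → X), the predictor g_{i,r,x} satisfies: the probability over a uniformly random y ∈ X that g_{i,r,x}(y) = f(y) is at least 1/2 + 1/(2·m·s). -/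
open scoped Classical

/-- The sample list used by the predictor: the `j`-th entry is `(x j, f (x j))`
for `j < i`, `(y, r i)` for `j = i`, and `(x j, r j)` for `j > i`. -/
def predSample {n m : ℕ} (f : (Fin n → Bool) → Bool) (i : Fin m)
    (r : Fin m → Bool) (x : Fin m → (Fin n → Bool)) (y : Fin n → Bool) :
    Fin m → (Fin n → Bool) × Bool :=
  fun j => if (j : ℕ) < (i : ℕ) then (x j, f (x j))
    else if j = i then (y, r i) else (x j, r j)

/-- The `(D, f)`-predictor `g_{i,r,x}`. -/
def predictor {n m : ℕ} (f : (Fin n → Bool) → Bool)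
    (D : (Fin m → (Fin n → Bool) × Bool) → Bool) (i : Fin m)
    (r : Fin m → Bool) (x : Fin m → (Fin n → Bool)) (y : Fin n → Bool) : Bool :=
  if D (predSample f i r x y) = true then !(r i) else r i

/-
Hybrid argument. Fix the position `i`. Replacing `x i` by the query point `y` keeps `x` uniform,
and the sample the predictor feeds to `D` is then the `i`-th hybrid, which coincides with the
`(i+1)`-th one when the random bit `r i` happens to equal `f (x i)`. Counting the four cases of
`D`'s answer and of `r i = f (x i)` shows that, on average over `r`, `x`, `y`, the predictor is
correct with probability `1/2 + P_i - P_{i+1}`. Averaging over `i` telescopes to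
`1/2 + (P_0 - P_m)/m ≥ 1/2 + 1/(ms)`; as each success probability is at most `1`, the triples whose
success probability reaches `1/2 + 1/(2ms)` have density at least `1/(2ms) ≥ 1/(2m²s)`.
-/

open Finset Function
open scoped BigOperators

section Uniform

variable {α β : Type*} [Fintype α] [Fintype β]

lemma pr_eq_expect (p : α → Prop) [DecidablePred p] :
    pr p = 𝔼 a, if p a then (1 : ℝ) else 0 := by
  rw [Fintype.expect_eq_sum_div_card, sum_boole, pr]
  congr

lemma pr_nonneg (p : α → Prop) : 0 ≤ pr p := by
  unfold pr
  positivity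

lemma pr_le_one (p : α → Prop) : pr p ≤ 1 :=
  div_le_one_of_le₀ (mod_cast card_filter_le _ _) (Nat.cast_nonneg _)

lemma expect_prod_type {M : Type*} [AddCommMonoid M] [Module ℚ≥0 M] (g : α × β → M) :
    𝔼 q, g q = 𝔼 a, 𝔼 b, g (a, b) := by
  rw [← univ_product_univ, expect_product]

lemma expect_sub_le_pr_le [Nonempty α] (Z : α → ℝ) (hZ : ∀ a, Z a ≤ 1) {c : ℝ} (hc : 0 ≤ c) :
    𝔼 a, Z a - c ≤ pr fun a => c ≤ Z a := by
  have hpt : ∀ a, Z a - c ≤ if c ≤ Z a then (1 : ℝ) else 0 := by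
    intro a
    split_ifs with ha
    · linarith [hZ a]
    · linarith [not_le.mp ha]
  calc 𝔼 a, Z a - c = 𝔼 a, (Z a - c) := by rw [expect_sub_distrib, Fintype.expect_const]
    _ ≤ pr fun a => c ≤ Z a := by
      rw [pr_eq_expect]
      exact expect_le_expect fun a _ => hpt a

end Uniform

section Resampling

variable {ι β : Type*} [Fintype ι] [DecidableEq ι] [Fintype β] [Nonempty β]

lemma expect_expect_update {M : Type*} [AddCommMonoid M] [Module ℚ≥0 M] (i : ι)
    (F : (ι → β) → M) : 𝔼 x, 𝔼 y, F (update x i y) = 𝔼 x, F x := by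
  have hinv : Involutive fun p : (ι → β) × β => (update p.1 i p.2, p.1 i) := by
    rintro ⟨x, y⟩
    simp only [update_self, update_idem, update_eq_self]
  calc 𝔼 x, 𝔼 y, F (update x i y) = 𝔼 p : (ι → β) × β, F (update p.1 i p.2) :=
        (expect_prod_type fun p : (ι → β) × β => F (update p.1 i p.2)).symm
    _ = 𝔼 p : (ι → β) × β, F p.1 :=
        Fintype.expect_bijective _ hinv.bijective _ (fun p => F p.1) fun _ => rfl
    _ = 𝔼 x, F x := by simp only [expect_prod_type, Fintype.expect_const]

lemma expect_ite_apply_eq [DecidableEq β] (i : ι) (b : β) (G : (ι → β) → ℝ)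
    (hG : ∀ r c, G (update r i c) = G r) :
    𝔼 r, (if r i = b then G r else 0) = (𝔼 r, G r) / Fintype.card β := by
  rw [← expect_expect_update i, expect_div]
  refine expect_congr rfl fun r _ => ?_
  simp only [update_self, hG]
  rw [Fintype.expect_ite_eq', NNRat.smul_def, div_eq_inv_mul]
  push_cast
  rfl

end Resampling

section Hybrid

variable {n m : ℕ} (f : (Fin n → Bool) → Bool) (D : (Fin m → (Fin n → Bool) × Bool) → Bool)

lemma hybProb_eq_expect (k : ℕ) :
    hybProb f D k = 𝔼 x, 𝔼 r, if D (hybSample f k x r) = true then (1 : ℝ) else 0 := by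
  rw [hybProb, pr_eq_expect, expect_prod_type]

variable (i : Fin m) (r : Fin m → Bool) (x : Fin m → Fin n → Bool)

lemma predSample_update (y : Fin n → Bool) :
    predSample f i r (update x i y) y = predSample f i r x y := by
  funext j
  by_cases hj : j = i
  · subst hj
    simp [predSample]
  · simp [predSample, hj]

lemma predSample_apply_self : predSample f i r x (x i) = hybSample f i x r := by
  funext j
  by_cases hj : j = i
  · subst hj
    simp [predSample, hybSample]
  · simp [predSample, hybSample, hj]

lemma hybSample_succ_of_apply_eq (h : r i = f (x i)) :
    hybSample f i x r = hybSample f (i + 1) x r := by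
  funext j
  by_cases hj : j = i
  · subst hj
    simp [hybSample, h]
  · have : (j : ℕ) < i ↔ (j : ℕ) < i + 1 := by
      have := Fin.val_ne_of_ne hj
      omega
    simp only [hybSample, this]

lemma hybSample_succ_update (c : Bool) :
    hybSample f (i + 1) x (update r i c) = hybSample f (i + 1) x r := by
  funext j
  by_cases hj : j = i
  · subst hj
    simp [hybSample]
  · simp [hybSample, hj]

end Hybrid

section Predictor

variable {n m : ℕ} (f : (Fin n → Bool) → Bool) (D : (Fin m → (Fin n → Bool) × Bool) → Bool)
  (i : Fin m)

lemma predictor_update (r : Fin m → Bool) (x : Fin m → Fin n → Bool) (y : Fin n → Bool) :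
    predictor f D i r (update x i y) y = predictor f D i r x y := by
  rw [predictor, predictor, predSample_update]

-- At `y = x i` the predictor queries `D` on the `i`-th hybrid, which is also the `(i+1)`-th one
-- exactly when its guess `r i` is correct.
lemma indicator_predictor_apply_self (r : Fin m → Bool) (x : Fin m → Fin n → Bool) :
    (if predictor f D i r x (x i) = f (x i) then (1 : ℝ) else 0) =
      (if D (hybSample f i x r) = true then 1 else 0) + (if r i = f (x i) then 1 else 0)
        - 2 * if r i = f (x i) then (if D (hybSample f (i + 1) x r) = true then 1 else 0) else 0 := by
  rw [predictor, predSample_apply_self]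
  by_cases hr : r i = f (x i)
  · rw [← hybSample_succ_of_apply_eq f i r x hr, hr]
    cases D (hybSample f i x r) <;> cases f (x i) <;> norm_num
  · rw [if_neg hr, Bool.eq_not.mpr hr]
    cases D (hybSample f i x r) <;> cases f (x i) <;> norm_num

lemma expect_predictor_apply_self (x : Fin m → Fin n → Bool) :
    𝔼 r, (if predictor f D i r x (x i) = f (x i) then (1 : ℝ) else 0) =
      1 / 2 + (𝔼 r, if D (hybSample f i x r) = true then (1 : ℝ) else 0)
        - 𝔼 r, if D (hybSample f (i + 1) x r) = true then (1 : ℝ) else 0 := by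
  have half := expect_ite_apply_eq i (f (x i)) (fun _ => (1 : ℝ)) fun _ _ => rfl
  have next := expect_ite_apply_eq i (f (x i))
    (fun r => if D (hybSample f (i + 1) x r) = true then (1 : ℝ) else 0)
    fun r c => by simp only [hybSample_succ_update]
  simp only [Fintype.expect_const, Fintype.card_bool] at half next
  simp only [indicator_predictor_apply_self, expect_sub_distrib, expect_add_distrib,
    ← mul_expect, half, next]
  push_cast
  ring

lemma expect_expect_pr_predictor :
    𝔼 r, 𝔼 x, pr (fun y => predictor f D i r x y = f y) =
      1 / 2 + hybProb f D i - hybProb f D (i + 1) := by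
  have resample : ∀ r, 𝔼 x, pr (fun y => predictor f D i r x y = f y) =
      𝔼 x, if predictor f D i r x (x i) = f (x i) then (1 : ℝ) else 0 := by
    intro r
    simp only [pr_eq_expect]
    conv_rhs => rw [← expect_expect_update i]
    simp only [update_self, predictor_update]
  simp only [resample]
  rw [expect_comm]
  simp only [expect_predictor_apply_self, expect_sub_distrib, expect_add_distrib,
    Fintype.expect_const, hybProb_eq_expect]

end Predictor

lemma expect_pr_predictor {n m : ℕ} [NeZero m] (f : (Fin n → Bool) → Bool)
    (D : (Fin m → (Fin n → Bool) × Bool) → Bool) :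
    𝔼 t : Fin m × (Fin m → Bool) × (Fin m → Fin n → Bool),
        pr (fun y => predictor f D t.1 t.2.1 t.2.2 y = f y) =
      1 / 2 + (hybProb f D 0 - hybProb f D m) / m := by
  have telescope : ∑ i : Fin m, (hybProb f D i - hybProb f D (i + 1)) =
      hybProb f D 0 - hybProb f D m := by
    rw [Fin.sum_univ_eq_sum_range (fun k => hybProb f D k - hybProb f D (k + 1)),
      sum_range_sub']
  calc _ = 𝔼 i, 𝔼 r, 𝔼 x, pr (fun y => predictor f D i r x y = f y) := by
        simp only [expect_prod_type]
    _ = 𝔼 i : Fin m, (1 / 2 + (hybProb f D i - hybProb f D (i + 1))) := by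
        simp only [expect_expect_pr_predictor, add_sub_assoc]
    _ = _ := by
        rw [expect_add_distrib, Fintype.expect_const, Fintype.expect_eq_sum_div_card, telescope,
          Fintype.card_fin]

theorem stmt3_general {n m : ℕ} (s : ℝ)
    (f : (Fin n → Bool) → Bool)
    (D : (Fin m → (Fin n → Bool) × Bool) → Bool)
    (h : hybProb f D 0 - hybProb f D m ≥ 1 / s) :
    pr (fun t : Fin m × (Fin m → Bool) × (Fin m → (Fin n → Bool)) =>
        pr (fun y : Fin n → Bool => predictor f D t.1 t.2.1 t.2.2 y = f y)
          ≥ 1 / 2 + 1 / (2 * m * s))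
      ≥ 1 / (2 * m ^ 2 * s) := by
  rcases Nat.eq_zero_or_pos m with rfl | hm
  · simpa using pr_nonneg _
  rcases le_or_gt s 0 with hs | hs
  · exact (one_div_nonpos.mpr (mul_nonpos_of_nonneg_of_nonpos (by positivity) hs)).trans
      (pr_nonneg _)
  have : NeZero m := NeZero.of_pos hm
  have hm1 : (1 : ℝ) ≤ m := mod_cast hm
  have gap : 1 / (m * s) ≤ (hybProb f D 0 - hybProb f D m) / m := by
    rw [mul_comm, ← div_div]
    exact div_le_div_of_nonneg_right h (Nat.cast_nonneg m)
  calc 1 / (2 * m ^ 2 * s) ≤ 1 / (2 * m * s) := by gcongr; nlinarith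
    _ = 1 / (m * s) - 1 / (2 * m * s) := by field_simp; ring
    _ ≤ (𝔼 t : Fin m × (Fin m → Bool) × (Fin m → Fin n → Bool),
          pr fun y => predictor f D t.1 t.2.1 t.2.2 y = f y) - (1 / 2 + 1 / (2 * m * s)) := by
        rw [expect_pr_predictor]
        linarith
    _ ≤ _ := expect_sub_le_pr_le _ (fun _ => pr_le_one _) (by positivity)

theorem stmt3 {n m : ℕ} (hn : 1 ≤ n) (hm : 1 ≤ m) (s : ℝ) (hs : 1 ≤ s)
    (f : (Fin n → Bool) → Bool)
    (D : (Fin m → (Fin n → Bool) × Bool) → Bool)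
    (h : hybProb f D 0 - hybProb f D m ≥ 1 / s) :
    pr (fun t : Fin m × (Fin m → Bool) × (Fin m → (Fin n → Bool)) =>
        pr (fun y : Fin n → Bool => predictor f D t.1 t.2.1 t.2.2 y = f y)
          ≥ 1 / 2 + 1 / (2 * m * s))
      ≥ 1 / (2 * m ^ 2 * s) :=
  stmt3_general s f D h
end

section
/- Let Ω be a nonempty finite type, let α be a finite type with N := card α ≥ 1, let L ≥ 1 be a natural number, and let tr : Ω → List α be a function such that 1 ≤ (tr w).length ≤ L for every w ∈ Ω. Let B be a finite subset of Ω. Then there exist a natural number t with 1 ≤ t ≤ L and a list P of elements of α with P.length = t such that, setting S := {w ∈ Ω | P is a prefix of tr w} and S₀ := {w ∈ Ω | tr w = P} (as finsets), the following hold: (i) card Ω ≤ (6·N)^t · card S; (ii) 2 · card S ≤ 3 · card S₀; (iii) card (B ∩ S) · card Ω ≤ 6^t · card B · card S. -/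
/-!
Start from the empty prefix and descend one symbol at a time, stopping at the first prefix `P`
for which at least two thirds of the strings consistent with `P` have trace exactly `P`. If `P` is
not such a prefix, more than a third of its cylinder splits among the `N` one-symbol extensions.
The extensions carrying less than a `1/(6N)` fraction of the cylinder hold at most a sixth of it
in total, so the heavy extensions hold more than a sixth; averaging the bad strings over the heavy
extensions finds one in which the density of `B` grows by a factor of at most `6`. Since traces
have length at most `L`, the descent stops after at most `L` steps.
-/

open Finset
open scoped Classical

theorem List.concat_prefix_iff {α : Type*} {P l : List α} {a : α} :
    P ++ [a] <+: l ↔ P <+: l ∧ l[P.length]? = some a := by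
  constructor
  · intro h
    refine ⟨(List.prefix_append P [a]).trans h, ?_⟩
    obtain ⟨s, rfl⟩ := h
    simp
  · rintro ⟨⟨s, rfl⟩, h⟩
    cases s with
    | nil => simp at h
    | cons b s =>
      simp only [List.getElem?_append_right le_rfl, Nat.sub_self, List.getElem?_cons_zero,
        Option.some.injEq] at h
      exact ⟨s, by simp [h]⟩

theorem List.prefix_and_getElem?_length_eq_none_iff {α : Type*} {P l : List α} :
    P <+: l ∧ l[P.length]? = none ↔ l = P := by
  constructor
  · rintro ⟨h, h'⟩
    rw [List.getElem?_eq_none_iff] at h'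
    exact (h.eq_of_length (le_antisymm h.length_le h')).symm
  · rintro rfl
    simp

theorem exists_heavy_of_sum_le {ι : Type*} [Fintype ι] (m β : ι → ℕ) {M b : ℕ}
    (hm : M < 3 * ∑ i, m i) (hβ : ∑ i, β i ≤ b) :
    ∃ i, M ≤ 6 * Fintype.card ι * m i ∧ β i * M ≤ 6 * b * m i := by
  set heavy := univ.filter fun i => M ≤ 6 * Fintype.card ι * m i
  have hcard : 0 < Fintype.card ι :=
    Fintype.card_pos_iff.2 (nonempty_of_sum_ne_zero (by omega : ∑ i, m i ≠ 0)).to_type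
  have hlight : 6 * ∑ i ∈ heavyᶜ, m i ≤ M := by
    refine Nat.le_of_mul_le_mul_left ?_ hcard
    calc Fintype.card ι * (6 * ∑ i ∈ heavyᶜ, m i)
        = ∑ i ∈ heavyᶜ, 6 * Fintype.card ι * m i := by rw [mul_sum, mul_sum]; ring_nf
      _ ≤ ∑ _i ∈ heavyᶜ, M := sum_le_sum fun i hi => by
        simp only [heavy, compl_filter, not_le, mem_filter, mem_univ, true_and] at hi; omega
      _ ≤ Fintype.card ι * M := by rw [sum_const, smul_eq_mul]; gcongr; exact card_le_univ _
  have hheavy : M < 6 * ∑ i ∈ heavy, m i := by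
    have := sum_add_sum_compl heavy m
    omega
  obtain ⟨i, hi, hle⟩ := exists_le_of_sum_le (f := fun i => β i * M) (g := fun i => 6 * b * m i)
    (nonempty_of_sum_ne_zero (by omega : ∑ i ∈ heavy, m i ≠ 0)) <|
    calc ∑ i ∈ heavy, β i * M
        ≤ b * M := by
          rw [← sum_mul]
          gcongr
          exact (sum_le_sum_of_subset (subset_univ _)).trans hβ
      _ ≤ b * (6 * ∑ i ∈ heavy, m i) := by gcongr
      _ = ∑ i ∈ heavy, 6 * b * m i := by rw [mul_sum, mul_sum]; ring_nf
  exact ⟨i, (mem_filter.1 hi).2, hle⟩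

section CapturesWithDensity

variable {Ω : Type*} [DecidableEq Ω]

-- The densities satisfy `#(B ∩ Y) / #Y ≤ k * #(B ∩ X) / #X`, cross-multiplied to stay in `ℕ`.
def CapturesWithDensity (B : Finset Ω) (c k : ℕ) (X Y : Finset Ω) : Prop :=
  #X ≤ c * #Y ∧ #(B ∩ Y) * #X ≤ k * #(B ∩ X) * #Y

theorem CapturesWithDensity.refl (B X : Finset Ω) : CapturesWithDensity B 1 1 X X := by
  simp [CapturesWithDensity]

theorem CapturesWithDensity.trans {B X Y Z : Finset Ω} {c c' k k' : ℕ}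
    (h : CapturesWithDensity B c k X Y) (h' : CapturesWithDensity B c' k' Y Z) :
    CapturesWithDensity B (c * c') (k * k') X Z := by
  obtain ⟨hXY, hbXY⟩ := h
  obtain ⟨hYZ, hbYZ⟩ := h'
  refine ⟨hXY.trans (by rw [mul_assoc]; gcongr), ?_⟩
  rcases (#Y).eq_zero_or_pos with hY | hY
  · have hX : #X = 0 := by simpa [hY] using hXY
    simp [hX]
  refine Nat.le_of_mul_le_mul_right ?_ hY
  calc #(B ∩ Z) * #X * #Y
      = #(B ∩ Z) * #Y * #X := by ring
    _ ≤ k' * #(B ∩ Y) * #Z * #X := by gcongr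
    _ = k' * #Z * (#(B ∩ Y) * #X) := by ring
    _ ≤ k' * #Z * (k * #(B ∩ X) * #Y) := by gcongr
    _ = k * k' * #(B ∩ X) * #Z * #Y := by ring

end CapturesWithDensity

section Cylinders

variable {Ω α : Type*} [Fintype Ω]

noncomputable def cylinder (tr : Ω → List α) (P : List α) : Finset Ω :=
  univ.filter fun w => P <+: tr w

noncomputable def traceFiber (tr : Ω → List α) (P : List α) : Finset Ω :=
  univ.filter fun w => tr w = P

def IsStoppingPrefix (tr : Ω → List α) (P : List α) : Prop :=
  2 * #(cylinder tr P) ≤ 3 * #(traceFiber tr P)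

variable (tr : Ω → List α)

@[simp]
theorem cylinder_nil : cylinder tr [] = univ := by
  simp [cylinder]

theorem card_inter_cylinder [Fintype α] (B : Finset Ω) (P : List α) :
    #(B ∩ cylinder tr P) = #(B ∩ traceFiber tr P) + ∑ a, #(B ∩ cylinder tr (P ++ [a])) := by
  simp only [cylinder, traceFiber, inter_filter, inter_univ]
  rw [card_eq_sum_card_fiberwise (f := fun w => (tr w)[P.length]?) (t := univ)
    (fun _ _ => mem_coe.2 (mem_univ _)), Fintype.sum_option]
  simp only [filter_filter, List.prefix_and_getElem?_length_eq_none_iff, List.concat_prefix_iff]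

theorem isStoppingPrefix_of_length_le {P : List α} (h : ∀ w, (tr w).length ≤ P.length) :
    IsStoppingPrefix tr P := by
  have : #(cylinder tr P) ≤ #(traceFiber tr P) := card_le_card fun w hw => by
    simp only [cylinder, traceFiber, mem_filter, mem_univ, true_and] at hw ⊢
    exact (hw.eq_of_length (le_antisymm hw.length_le (h w))).symm
  unfold IsStoppingPrefix
  omega

theorem exists_capturesWithDensity_concat [Fintype α] (B : Finset Ω) {P : List α}
    (hP : ¬IsStoppingPrefix tr P) :
    ∃ a, CapturesWithDensity B (6 * Fintype.card α) 6 (cylinder tr P) (cylinder tr (P ++ [a])) := by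
  have hmass := card_inter_cylinder tr univ P
  have hbad := card_inter_cylinder tr B P
  simp only [univ_inter] at hmass
  unfold IsStoppingPrefix at hP
  exact exists_heavy_of_sum_le (fun a => #(cylinder tr (P ++ [a])))
    (fun a => #(B ∩ cylinder tr (P ++ [a]))) (by omega) (by omega)

theorem exists_isStoppingPrefix_extension [Fintype α] {L : ℕ}
    (htr : ∀ w, (tr w).length ≤ L) (B : Finset Ω) (n : ℕ) (P : List α)
    (hn : L ≤ P.length + n) :
    ∃ d ≤ n, ∃ Q : List α, Q.length = P.length + d ∧ IsStoppingPrefix tr Q ∧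
      CapturesWithDensity B ((6 * Fintype.card α) ^ d) (6 ^ d) (cylinder tr P) (cylinder tr Q) := by
  induction n generalizing P with
  | zero =>
    refine ⟨0, le_rfl, P, rfl, isStoppingPrefix_of_length_le tr fun w => (htr w).trans hn, ?_⟩
    simpa only [pow_zero] using CapturesWithDensity.refl B _
  | succ n ih =>
    by_cases hP : IsStoppingPrefix tr P
    · refine ⟨0, Nat.zero_le _, P, rfl, hP, ?_⟩
      simpa only [pow_zero] using CapturesWithDensity.refl B _
    obtain ⟨a, ha⟩ := exists_capturesWithDensity_concat tr B hP
    obtain ⟨d, hd, Q, hQ, hQstop, hcap⟩ :=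
      ih (P ++ [a]) (by rw [List.length_append, List.length_singleton]; omega)
    refine ⟨d + 1, by omega, Q, by rw [hQ, List.length_append, List.length_singleton]; omega,
      hQstop, ?_⟩
    rw [pow_succ', pow_succ']
    exact ha.trans hcap

end Cylinders

theorem stmt5_general {Ω α : Type*} [Fintype Ω] [Nonempty Ω] [Fintype α]
    (L : ℕ)
    (tr : Ω → List α)
    (htr : ∀ w : Ω, 1 ≤ (tr w).length ∧ (tr w).length ≤ L)
    (B : Finset Ω) :
    ∃ (t : ℕ) (P : List α), 1 ≤ t ∧ t ≤ L ∧ P.length = t ∧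
      (Fintype.card Ω ≤ (6 * Fintype.card α) ^ t *
        (Finset.univ.filter (fun w : Ω => P.IsPrefix (tr w))).card) ∧
      (2 * (Finset.univ.filter (fun w : Ω => P.IsPrefix (tr w))).card ≤
        3 * (Finset.univ.filter (fun w : Ω => tr w = P)).card) ∧
      ((B ∩ Finset.univ.filter (fun w : Ω => P.IsPrefix (tr w))).card * Fintype.card Ω ≤
        6 ^ t * B.card *
          (Finset.univ.filter (fun w : Ω => P.IsPrefix (tr w))).card) := by
  have hnil : ¬IsStoppingPrefix tr [] := by
    have hfiber : traceFiber tr [] = ∅ :=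
      filter_false_of_mem fun w _ h => by simpa [h] using (htr w).1
    simp [IsStoppingPrefix, hfiber]
  obtain ⟨t, htL, P, hPt, hstop, hmass, hbad⟩ :=
    exists_isStoppingPrefix_extension tr (fun w => (htr w).2) B L [] (by simp)
  rw [List.length_nil, zero_add] at hPt
  have ht : t ≠ 0 := by
    rintro rfl
    exact hnil (List.length_eq_zero_iff.1 hPt ▸ hstop)
  rw [cylinder_nil, card_univ] at hmass hbad
  rw [inter_univ] at hbad
  exact ⟨t, P, Nat.one_le_iff_ne_zero.2 ht, htL, hPt, hmass, hstop, hbad⟩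

theorem stmt5 {Ω α : Type*} [Fintype Ω] [Nonempty Ω] [Fintype α]
    (hN : 1 ≤ Fintype.card α) (L : ℕ) (hL : 1 ≤ L)
    (tr : Ω → List α)
    (htr : ∀ w : Ω, 1 ≤ (tr w).length ∧ (tr w).length ≤ L)
    (B : Finset Ω) :
    ∃ (t : ℕ) (P : List α), 1 ≤ t ∧ t ≤ L ∧ P.length = t ∧
      (Fintype.card Ω ≤ (6 * Fintype.card α) ^ t *
        (Finset.univ.filter (fun w : Ω => P.IsPrefix (tr w))).card) ∧
      (2 * (Finset.univ.filter (fun w : Ω => P.IsPrefix (tr w))).card ≤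
        3 * (Finset.univ.filter (fun w : Ω => tr w = P)).card) ∧
      ((B ∩ Finset.univ.filter (fun w : Ω => P.IsPrefix (tr w))).card * Fintype.card Ω ≤
        6 ^ t * B.card *
          (Finset.univ.filter (fun w : Ω => P.IsPrefix (tr w))).card) :=
  stmt5_general L tr htr B
end

section
/- (Theorem 7, MIN player; Newman, Althöfer, Lipton–Young.) Let r ≥ 1 and c ≥ 1 be naturals, let M : Fin r → Fin c → ℝ be a matrix, let ε > 0 be a real number, and let k ≥ 1 be a natural number with (k : ℝ) ≥ Real.log c / (2·ε²). Then there exists a multiset S of elements of Fin r with card S = k such that for every j ∈ Fin c, (∑_{i ∈ S} M i j) / k ≤ v(M) + ε·(Mmax − Mmin), where the sum is over the multiset S with multiplicity. -/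
/-- The largest entry of the matrix `M`. -/
noncomputable def Mmax {r c : ℕ} (M : Fin r → Fin c → ℝ) : ℝ :=
  ⨆ i : Fin r, ⨆ j : Fin c, M i j

/-- The smallest entry of the matrix `M`. -/
noncomputable def Mmin {r c : ℕ} (M : Fin r → Fin c → ℝ) : ℝ :=
  ⨅ i : Fin r, ⨅ j : Fin c, M i j

/-- The MIN-value of the zero-sum game with payoff matrix `M`: the infimum over
mixed strategies `p` of the row player of the maximum over pure strategies `j`
of the column player of the expected payoff. -/
noncomputable def minValue {r c : ℕ} (M : Fin r → Fin c → ℝ) : ℝ :=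
  ⨅ p : {p : Fin r → ℝ // (∀ i, 0 ≤ p i) ∧ ∑ i, p i = 1},
    ⨆ j : Fin c, ∑ i, p.1 i * M i j

/-!
Sample `k` rows independently from a mixed strategy `p` that is optimal up to `η`. For each
column `j` the row sum is a sum of `k` independent variables with mean at most `v(M) + η` and
range `Mmax - Mmin`, so by Hoeffding's inequality it exceeds `k (v(M) + ε (Mmax - Mmin)) + 2kη`
with probability less than `exp (-2kε²) ≤ 1 / c`; the slack `η > 0` is what makes this strict.
A union bound over the `c` columns leaves a sample that is good for every column, and since there
are finitely many samples, letting `η → 0` removes the slack.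
-/

open MeasureTheory ProbabilityTheory

theorem measureReal_pi_sum_sub_integral_ge_le {α κ : Type*} [MeasurableSpace α] [Fintype κ]
    (P : Measure α) [IsProbabilityMeasure P] {g : α → ℝ} (hg : Measurable g) {a b : ℝ}
    (hab : ∀ x, g x ∈ Set.Icc a b) {t : ℝ} (ht : 0 ≤ t) :
    (Measure.pi fun _ : κ => P).real
        {ω | Fintype.card κ * t ≤ ∑ s, (g (ω s) - ∫ x, g x ∂P)} ≤
      Real.exp (-2 * Fintype.card κ * t ^ 2 / (b - a) ^ 2) := by
  have hsubG : HasSubgaussianMGF (fun x => g x - ∫ x, g x ∂P) ((‖b - a‖₊ / 2) ^ 2) P :=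
    hasSubgaussianMGF_of_mem_Icc hg.aemeasurable (ae_of_all _ hab)
  have hindep := iIndepFun_pi (μ := fun _ : κ => P) (X := fun _ x => g x - ∫ x, g x ∂P)
    fun _ => (hg.sub_const _).aemeasurable
  have hsample (s : κ) : HasSubgaussianMGF (fun ω : κ → α => g (ω s) - ∫ x, g x ∂P)
      ((‖b - a‖₊ / 2) ^ 2) (Measure.pi fun _ : κ => P) :=
    HasSubgaussianMGF.of_map (Y := Function.eval s) (measurable_pi_apply s).aemeasurable
      (by rwa [(measurePreserving_eval (fun _ : κ => P) s).map_eq])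
  convert HasSubgaussianMGF.measure_sum_ge_le_of_iIndepFun hindep (s := Finset.univ)
    (fun s _ => hsample s) (ε := Fintype.card κ * t) (by positivity) using 2
  simp only [Finset.sum_const, Finset.card_univ, nsmul_eq_mul, NNReal.coe_mul, NNReal.coe_natCast,
    NNReal.coe_pow, NNReal.coe_div, coe_nnnorm, Real.norm_eq_abs, NNReal.coe_ofNat, div_pow, sq_abs]
  field_simp

theorem exists_forall_sum_lt_of_card_mul_exp_lt {α ι κ : Type*} [MeasurableSpace α] [Fintype ι]
    [Fintype κ] (P : Measure α) [IsProbabilityMeasure P] {f : ι → α → ℝ}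
    (hf : ∀ j, Measurable (f j)) {a b : ℝ} (hab : ∀ j x, f j x ∈ Set.Icc a b) {t : ℝ}
    (ht : 0 ≤ t)
    (hunion : Fintype.card ι * Real.exp (-2 * Fintype.card κ * t ^ 2 / (b - a) ^ 2) < 1) :
    ∃ ω : κ → α, ∀ j, ∑ s, f j (ω s) < Fintype.card κ * (∫ x, f j x ∂P + t) := by
  set μ := Measure.pi fun _ : κ => P
  set bad : ι → Set (κ → α) :=
    fun j => {ω | Fintype.card κ * t ≤ ∑ s, (f j (ω s) - ∫ x, f j x ∂P)}
  have hlt : μ.real (⋃ j, bad j) < μ.real Set.univ := calc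
    _ ≤ ∑ j, μ.real (bad j) := measureReal_iUnion_fintype_le _
    _ ≤ ∑ _j : ι, Real.exp (-2 * Fintype.card κ * t ^ 2 / (b - a) ^ 2) :=
      Finset.sum_le_sum fun j _ => measureReal_pi_sum_sub_integral_ge_le P (hf j) (hab j) ht
    _ < μ.real Set.univ := by simpa using hunion
  obtain ⟨ω, hω⟩ := (Set.ne_univ_iff_exists_notMem (⋃ j, bad j)).1 fun h => hlt.ne (by rw [h])
  refine ⟨ω, fun j => ?_⟩
  have hgood : ¬ω ∈ bad j := fun h => hω (Set.mem_iUnion_of_mem j h)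
  simp only [bad, Set.mem_ofPred_eq, not_le, Finset.sum_sub_distrib, Finset.sum_const,
    Finset.card_univ, nsmul_eq_mul] at hgood
  linarith

theorem exists_isProbabilityMeasure_integral_eq_sum {α : Type*} [Fintype α] [MeasurableSpace α]
    [MeasurableSingletonClass α] {p : α → ℝ} (hp0 : ∀ i, 0 ≤ p i) (hp1 : ∑ i, p i = 1) :
    ∃ P : Measure α, IsProbabilityMeasure P ∧ ∀ f : α → ℝ, ∫ i, f i ∂P = ∑ i, p i * f i := by
  have hsum : ∑ i, ENNReal.ofReal (p i) = 1 := by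
    rw [← ENNReal.ofReal_sum_of_nonneg fun i _ => hp0 i, hp1, ENNReal.ofReal_one]
  refine ⟨(PMF.ofFintype _ hsum).toMeasure, inferInstance, fun f => ?_⟩
  simp [PMF.integral_eq_sum, ENNReal.toReal_ofReal (hp0 _)]

theorem exists_forall_le_of_forall_pos_exists_forall_lt {σ ι : Type*} [Finite σ] {g : σ → ι → ℝ}
    {x : ℝ} (h : ∀ δ > 0, ∃ s, ∀ j, g s j < x + δ) : ∃ s, ∀ j, g s j ≤ x := by
  by_contra! hbad
  choose J hJ using hbad
  have : Nonempty σ := let ⟨s, _⟩ := h 1 one_pos; ⟨s⟩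
  obtain ⟨s₀, hs₀⟩ := Finite.exists_min fun s => g s (J s)
  obtain ⟨s, hs⟩ := h _ (sub_pos.2 (hJ s₀))
  linarith [hs (J s), hs₀ s]

section MatrixGame

variable {r c : ℕ} (M : Fin r → Fin c → ℝ)

theorem Mmin_le_apply (i : Fin r) (j : Fin c) : Mmin M ≤ M i j :=
  (ciInf_le (Set.finite_range _).bddBelow i).trans (ciInf_le (Set.finite_range _).bddBelow j)

theorem apply_le_Mmax (i : Fin r) (j : Fin c) : M i j ≤ Mmax M :=
  (le_ciSup (Set.finite_range _).bddAbove j).trans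
    (le_ciSup (f := fun i => ⨆ j, M i j) (Set.finite_range _).bddAbove i)

theorem nonempty_mixedStrategy (hr : 1 ≤ r) :
    Nonempty {p : Fin r → ℝ // (∀ i, 0 ≤ p i) ∧ ∑ i, p i = 1} :=
  ⟨⟨Pi.single ⟨0, hr⟩ 1, single_mem_stdSimplex ℝ _⟩⟩

theorem Mmin_le_minValue (hr : 1 ≤ r) [Nonempty (Fin c)] : Mmin M ≤ minValue M := by
  have := nonempty_mixedStrategy hr
  refine le_ciInf fun p => ?_
  obtain ⟨j⟩ := ‹Nonempty (Fin c)›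
  calc Mmin M = ∑ i, p.1 i * Mmin M := by rw [← Finset.sum_mul, p.2.2, one_mul]
    _ ≤ ∑ i, p.1 i * M i j :=
      Finset.sum_le_sum fun i _ => mul_le_mul_of_nonneg_left (Mmin_le_apply M i j) (p.2.1 i)
    _ ≤ ⨆ j, ∑ i, p.1 i * M i j :=
      le_ciSup (f := fun j => ∑ i, p.1 i * M i j) (Set.finite_range _).bddAbove j

theorem exists_forall_sum_mul_lt_minValue_add (hr : 1 ≤ r) {δ : ℝ} (hδ : 0 < δ) :
    ∃ p : Fin r → ℝ, (∀ i, 0 ≤ p i) ∧ ∑ i, p i = 1 ∧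
      ∀ j, ∑ i, p i * M i j < minValue M + δ := by
  have := nonempty_mixedStrategy hr
  obtain ⟨p, hp⟩ := exists_lt_of_ciInf_lt (lt_add_of_pos_right (minValue M) hδ)
  exact ⟨p.1, p.2.1, p.2.2, fun j => (le_ciSup (Set.finite_range _).bddAbove j).trans_lt hp⟩

theorem exists_sample_forall_sum_lt_minValue_add (hr : 1 ≤ r) {ε : ℝ} (hε : 0 < ε) {k : ℕ}
    (hk : 1 ≤ k) (hklog : (k : ℝ) ≥ Real.log c / (2 * ε ^ 2)) (hd : Mmin M < Mmax M) {δ : ℝ}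
    (hδ : 0 < δ) :
    ∃ ω : Fin k → Fin r,
      ∀ j, ∑ s, M (ω s) j < k * (minValue M + ε * (Mmax M - Mmin M)) + δ := by
  have hk0 : (0 : ℝ) < k := by exact_mod_cast hk
  set d := Mmax M - Mmin M
  set η := δ / (2 * k)
  have hη : 0 < η := by positivity
  obtain ⟨p, hp0, hp1, hp⟩ := exists_forall_sum_mul_lt_minValue_add M hr hη
  obtain ⟨P, hP, hPint⟩ := exists_isProbabilityMeasure_integral_eq_sum hp0 hp1
  set t := ε * d + η
  have hunion : (Fintype.card (Fin c) : ℝ) *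
      Real.exp (-2 * Fintype.card (Fin k) * t ^ 2 / d ^ 2) < 1 := by
    have hd0 : 0 < d := sub_pos.2 hd
    have hεt : ε < t / d := by rw [lt_div_iff₀ hd0]; linarith
    have hlog : Real.log c < 2 * k * t ^ 2 / d ^ 2 := calc
      _ ≤ 2 * k * ε ^ 2 := by linarith [(div_le_iff₀ (by positivity)).1 hklog]
      _ < 2 * k * (t / d) ^ 2 := by gcongr
      _ = _ := by rw [div_pow, mul_div_assoc]
    rw [Fintype.card_fin, Fintype.card_fin, neg_mul, neg_mul, neg_div, Real.exp_neg,
      ← div_eq_mul_inv, div_lt_one (Real.exp_pos _)]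
    exact (Real.le_exp_log _).trans_lt (Real.exp_lt_exp.2 hlog)
  obtain ⟨ω, hω⟩ := exists_forall_sum_lt_of_card_mul_exp_lt P (f := fun j i => M i j)
    (fun _ => .of_discrete) (fun j i => ⟨Mmin_le_apply M i j, apply_le_Mmax M i j⟩)
    (by positivity) hunion
  refine ⟨ω, fun j => ?_⟩
  have hj := hω j
  simp only [Fintype.card_fin, hPint] at hj
  calc ∑ s, M (ω s) j < k * (∑ i, p i * M i j + t) := hj
    _ ≤ k * (minValue M + η + t) := by gcongr; exact (hp j).le
    _ = k * (minValue M + ε * d) + δ := by simp only [t, η]; field_simp; ring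

end MatrixGame

theorem stmt6_general {r c : ℕ} (hr : 1 ≤ r) (M : Fin r → Fin c → ℝ)
    (ε : ℝ) (hε : 0 < ε) (k : ℕ) (hk : 1 ≤ k)
    (hklog : (k : ℝ) ≥ Real.log c / (2 * ε ^ 2)) :
    ∃ S : Multiset (Fin r), Multiset.card S = k ∧
      ∀ j : Fin c,
        (S.map (fun i => M i j)).sum / (k : ℝ) ≤
          minValue M + ε * (Mmax M - Mmin M) := by
  have hk0 : (0 : ℝ) < k := by exact_mod_cast hk
  rcases lt_or_ge (Mmin M) (Mmax M) with hd | hd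
  · obtain ⟨ω, hω⟩ := exists_forall_le_of_forall_pos_exists_forall_lt
      fun δ hδ => exists_sample_forall_sum_lt_minValue_add M hr hε hk hklog hd hδ
    refine ⟨Finset.univ.val.map ω, by simp, fun j => ?_⟩
    rw [Multiset.map_map, div_le_iff₀ hk0, mul_comm]
    exact hω j
  refine ⟨Multiset.replicate k ⟨0, hr⟩, Multiset.card_replicate _ _, fun j => ?_⟩
  have : Nonempty (Fin c) := ⟨j⟩
  have hconst : Mmax M = Mmin M :=
    le_antisymm hd ((Mmin_le_apply M ⟨0, hr⟩ j).trans (apply_le_Mmax M _ j))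
  rw [div_le_iff₀ hk0, hconst, sub_self, mul_zero, add_zero]
  calc _ ≤ k * Mmax M := by simpa using mul_le_mul_of_nonneg_left (apply_le_Mmax M _ j) hk0.le
    _ ≤ minValue M * k := by rw [hconst, mul_comm]; gcongr; exact Mmin_le_minValue M hr

theorem stmt6 {r c : ℕ} (hr : 1 ≤ r) (hc : 1 ≤ c) (M : Fin r → Fin c → ℝ)
    (ε : ℝ) (hε : 0 < ε) (k : ℕ) (hk : 1 ≤ k)
    (hklog : (k : ℝ) ≥ Real.log c / (2 * ε ^ 2)) :
    ∃ S : Multiset (Fin r), Multiset.card S = k ∧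
      ∀ j : Fin c,
        (S.map (fun i => M i j)).sum / (k : ℝ) ≤
          minValue M + ε * (Mmax M - Mmin M) :=
  stmt6_general hr M ε hε k hk hklog
end

section
/- (Function-family abstraction of Theorem 8: learning or succinct non-uniform PRF.) Let n ≥ 1 and m ≥ 1 be naturals, let X be the type of Boolean strings of length n, let s ≥ 1 be a real number, let F be a nonempty finite set of functions X → Bool, and let 𝒟 be a nonempty finite set of functions (Fin m → X × Bool) → Bool. Then at least one of the following holds: (a) there exists a multiset S of elements of 𝒟 with 1 ≤ card S ≤ ⌈32·s²·Real.log |F|⌉ + 1 such that for every f ∈ F, ∑_{D ∈ S} adv(f,D) ≥ (card S)/(8·s); or (b) there exists a multiset T of elements of F with 1 ≤ card T ≤ ⌈8·s²·Real.log |𝒟|⌉ + 1 such that for every D ∈ 𝒟, ∑_{f ∈ T} adv(f,D) ≤ (card T)/(2·s). (Sums are over multisets with multiplicity.) -/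
open scoped Classical

/-- The distinguishing advantage `adv(f, D) = |P_0(f,D) − P_m(f,D)|`. -/
noncomputable def adv {n m : ℕ} (f : (Fin n → Bool) → Bool)
    (D : (Fin m → (Fin n → Bool) × Bool) → Bool) : ℝ :=
  |hybProb f D 0 - hybProb f D m|

/-!
Consider the zero-sum game in which one player picks `f ∈ F`, the other picks
`D ∈ 𝒟`, and the payoff is `adv f D ∈ [0, 1]`. By the von Neumann minimax theorem there are
mixed strategies `p` on `F` and `q` on `𝒟` with `p`-average advantage against every `D` at most
the `q`-average advantage against every `f`. Either `q` has average advantage at least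
`1/(4s)` against every `f`, or some `f` makes it smaller, and then so is the `p`-average against
every `D`. In each case, `k` independent samples from the optimal mixed strategy reproduce all its
averages up to `t` simultaneously with positive probability, by Hoeffding's inequality and a
union bound, as soon as `log (number of constraints) < 2 k t²`; the sample is the required
multiset.
-/

open Matrix Set MeasureTheory ProbabilityTheory

lemma pr_mem_Icc {α : Type*} [Fintype α] (p : α → Prop) : pr p ∈ Icc 0 1 :=
  ⟨by unfold pr; positivity, div_le_one_of_le₀
    (by exact_mod_cast (Finset.card_filter_le _ _).trans_eq Finset.card_univ) (Nat.cast_nonneg _)⟩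

lemma hybProb_mem_Icc {n m : ℕ} (f : (Fin n → Bool) → Bool)
    (D : (Fin m → (Fin n → Bool) × Bool) → Bool) (i : ℕ) : hybProb f D i ∈ Icc 0 1 :=
  pr_mem_Icc _

lemma adv_mem_Icc {n m : ℕ} (f : (Fin n → Bool) → Bool)
    (D : (Fin m → (Fin n → Bool) × Bool) → Bool) : adv f D ∈ Icc 0 1 := by
  obtain ⟨h₀, h₀'⟩ := hybProb_mem_Icc f D 0
  obtain ⟨hm, hm'⟩ := hybProb_mem_Icc f D m
  exact ⟨abs_nonneg _, abs_sub_le_iff.2 ⟨by linarith, by linarith⟩⟩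

/-- The von Neumann minimax theorem for a finite matrix game, in saddle point form. -/
theorem Matrix.exists_vecMul_le_mulVec_of_mem_stdSimplex {α β : Type*} [Fintype α] [Fintype β]
    [Nonempty α] [Nonempty β] (A : Matrix α β ℝ) :
    ∃ p ∈ stdSimplex ℝ α, ∃ q ∈ stdSimplex ℝ β, ∀ a b, (p ᵥ* A) b ≤ (A *ᵥ q) a := by
  classical
  obtain ⟨p, hp, q, hq, hsaddle⟩ := Sion.exists_isSaddlePointOn (f := fun x y => x ⬝ᵥ A *ᵥ y)
    (nonempty_coe_sort.1 inferInstance) (convex_stdSimplex ℝ α) (isCompact_stdSimplex ℝ α)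
    (fun y _ => (continuous_id.dotProduct continuous_const).lowerSemicontinuous
      |>.lowerSemicontinuousOn _)
    (fun y _ => ((dotProductBilin ℝ ℝ).flip (A *ᵥ y)).convexOn (convex_stdSimplex ℝ α)
      |>.quasiconvexOn)
    (convex_stdSimplex ℝ β) (nonempty_coe_sort.1 inferInstance) (isCompact_stdSimplex ℝ β)
    (fun x _ => (continuous_const.dotProduct (continuous_const.matrix_mulVec continuous_id))
      |>.upperSemicontinuous.upperSemicontinuousOn _)
    (fun x _ => by
      simp_rw [dotProduct_mulVec]
      exact ((dotProductBilin ℝ ℝ (x ᵥ* A)).concaveOn (convex_stdSimplex ℝ β)).quasiconcaveOn)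
  refine ⟨p, hp, q, hq, fun a b => ?_⟩
  have := hsaddle _ (single_mem_stdSimplex ℝ a) _ (single_mem_stdSimplex ℝ b)
  dsimp only at this
  rwa [single_one_dotProduct, dotProduct_mulVec, dotProduct_single_one] at this

lemma natCast_mul_exp_neg_lt_one {N : ℕ} {x : ℝ} (h : Real.log N < x) :
    N * Real.exp (-x) < 1 := by
  rcases Nat.eq_zero_or_pos N with rfl | hN
  · simp
  rw [← Real.exp_log (Nat.cast_pos.2 hN), ← Real.exp_add, Real.exp_lt_one_iff]
  linarith

theorem exists_sample_sum_le {ι κ : Type*} [Fintype ι] [Fintype κ] {q : ι → ℝ}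
    (hq : q ∈ stdSimplex ℝ ι) (G : Matrix κ ι ℝ) (hG : ∀ c i, G c i ∈ Icc 0 1) {k : ℕ} {t : ℝ}
    (ht : 0 ≤ t) (hkt : Real.log (Fintype.card κ) < 2 * k * t ^ 2) :
    ∃ σ : Fin k → ι, ∀ c, ∑ j, G c (σ j) ≤ k * ((G *ᵥ q) c + t) := by
  have hk : k ≠ 0 := by
    rintro rfl
    simp only [CharP.cast_eq_zero, mul_zero, zero_mul] at hkt
    linarith [Real.log_natCast_nonneg (Fintype.card κ)]
  let _ : MeasurableSpace ι := ⊤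
  have _ : DiscreteMeasurableSpace ι := ⟨fun _ => trivial⟩
  let P : PMF ι := PMF.ofFintype (fun i => ENNReal.ofReal (q i)) (by
    rw [← ENNReal.ofReal_sum_of_nonneg fun i _ => hq.1 i, hq.2, ENNReal.ofReal_one])
  let μ : Measure (Fin k → ι) := Measure.pi fun _ => P.toMeasure
  let bad (c : κ) : Set (Fin k → ι) := {σ | k * t ≤ ∑ j, (G c (σ j) - (G *ᵥ q) c)}
  have hmean (c : κ) (j : Fin k) : μ[fun σ => G c (σ j)] = (G *ᵥ q) c := by
    rw [integral_comp_eval (f := fun i => G c i) (μ := fun _ => P.toMeasure) (i := j)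
      .of_discrete, PMF.integral_eq_sum]
    simp [P, mulVec, dotProduct, ENNReal.toReal_ofReal (hq.1 _), mul_comm]
  have hbad (c : κ) : μ.real (bad c) ≤ Real.exp (-(2 * k * t ^ 2)) := by
    have hsubG (j : Fin k) : HasSubgaussianMGF (fun σ : Fin k → ι => G c (σ j) - (G *ᵥ q) c)
        ((‖(1 : ℝ) - 0‖₊ / 2) ^ 2) μ := by
      simpa only [hmean] using hasSubgaussianMGF_of_mem_Icc (μ := μ) (X := fun σ => G c (σ j))
        Measurable.of_discrete.aemeasurable (ae_of_all _ fun σ => hG c (σ j))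
    have hindep : iIndepFun (fun j (σ : Fin k → ι) => G c (σ j) - (G *ᵥ q) c) μ :=
      iIndepFun_pi (X := fun _ i => G c i - (G *ᵥ q) c)
        fun _ => Measurable.of_discrete.aemeasurable
    refine (HasSubgaussianMGF.measure_sum_ge_le_of_iIndepFun hindep (s := Finset.univ)
      (fun j _ => hsubG j) (ε := k * t) (by positivity)).trans_eq ?_
    congr 1
    simp only [sub_zero, nnnorm_one, Finset.sum_const, Finset.card_univ, Fintype.card_fin,
      nsmul_eq_mul, NNReal.coe_mul, NNReal.coe_natCast, NNReal.coe_pow, NNReal.coe_div,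
      NNReal.coe_one, NNReal.coe_ofNat]
    field_simp
  by_contra! hcover
  have hunion : (univ : Set (Fin k → ι)) ⊆ ⋃ c, bad c := fun σ _ => by
    obtain ⟨c, hc⟩ := hcover σ
    refine mem_iUnion.2 ⟨c, ?_⟩
    simp only [bad, mem_ofPred_eq, Finset.sum_sub_distrib, Finset.sum_const, Finset.card_univ,
      Fintype.card_fin, nsmul_eq_mul]
    linarith
  have := calc (1 : ℝ) = μ.real univ := probReal_univ.symm
    _ ≤ μ.real (⋃ c, bad c) := measureReal_mono hunion
    _ ≤ ∑ c, μ.real (bad c) := measureReal_iUnion_fintype_le _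
    _ ≤ ∑ _c : κ, Real.exp (-(2 * k * t ^ 2)) := Finset.sum_le_sum fun c _ => hbad c
    _ = Fintype.card κ * Real.exp (-(2 * k * t ^ 2)) := by simp
  linarith [natCast_mul_exp_neg_lt_one hkt]

lemma lt_two_mul_ceil_add_one_mul_sq (L : ℝ) {a t : ℝ} (hat : 2 * a * t ^ 2 = 1) :
    L < 2 * ((⌈a * L⌉₊ + 1 : ℕ) : ℝ) * t ^ 2 := by
  have ht : 0 < 2 * t ^ 2 := by
    have : t ^ 2 ≠ 0 := fun h => by simp [h] at hat
    positivity
  calc L = 2 * t ^ 2 * (a * L) := by linear_combination (-L) * hat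
    _ < 2 * t ^ 2 * (⌈a * L⌉₊ + 1) := mul_lt_mul_of_pos_left (by linarith [Nat.le_ceil (a * L)]) ht
    _ = _ := by push_cast; ring

section Multiset

variable {ι κ : Type*} {s : Finset ι} {C : Finset κ} (g : κ → ι → ℝ) {q : s → ℝ} {v t a : ℝ}

theorem exists_multiset_sum_map_le (hg : ∀ c i, g c i ∈ Icc 0 1) (hq : q ∈ stdSimplex ℝ s)
    (ht : 0 ≤ t) (hat : 2 * a * t ^ 2 = 1) (hv : ∀ c ∈ C, ∑ i : s, g c i * q i ≤ v) :
    ∃ S : Multiset ι, (∀ i ∈ S, i ∈ s) ∧ Multiset.card S = ⌈a * Real.log C.card⌉₊ + 1 ∧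
      ∀ c ∈ C, (S.map (g c)).sum ≤ Multiset.card S * (v + t) := by
  have hk := lt_two_mul_ceil_add_one_mul_sq (Real.log C.card) hat
  rw [← Fintype.card_coe] at hk
  obtain ⟨σ, hσ⟩ := exists_sample_sum_le hq (of fun (c : C) (i : s) => g c i)
    (fun c i => hg c i) ht hk
  refine ⟨Finset.univ.val.map fun j => (σ j).1, by simp, by simp, fun c hc => ?_⟩
  rw [Multiset.map_map, Multiset.card_map, Finset.card_val, Finset.card_univ, Fintype.card_fin]
  exact (hσ ⟨c, hc⟩).trans (by gcongr; exact hv c hc)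

theorem exists_multiset_sum_map_ge (hg : ∀ c i, g c i ∈ Icc 0 1) (hq : q ∈ stdSimplex ℝ s)
    (ht : 0 ≤ t) (hat : 2 * a * t ^ 2 = 1) (hv : ∀ c ∈ C, v ≤ ∑ i : s, g c i * q i) :
    ∃ S : Multiset ι, (∀ i ∈ S, i ∈ s) ∧ Multiset.card S = ⌈a * Real.log C.card⌉₊ + 1 ∧
      ∀ c ∈ C, Multiset.card S * (v - t) ≤ (S.map (g c)).sum := by
  have hv' (c : κ) (hc : c ∈ C) : ∑ i : s, (1 - g c i) * q i ≤ 1 - v := by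
    simp only [sub_mul, one_mul, Finset.sum_sub_distrib, hq.2]
    linarith [hv c hc]
  obtain ⟨S, hSs, hcard, hS⟩ := exists_multiset_sum_map_le (fun c i => 1 - g c i)
    (fun c i => ⟨by simp [(hg c i).2], by simp [(hg c i).1]⟩) hq ht hat hv'
  refine ⟨S, hSs, hcard, fun c hc => ?_⟩
  have := hS c hc
  rw [Multiset.sum_map_sub, Multiset.map_const', Multiset.sum_replicate, nsmul_one] at this
  linarith

end Multiset

theorem stmt8_general {n m : ℕ} (s : ℝ) (hs : 1 ≤ s)
    (F : Finset ((Fin n → Bool) → Bool)) (hF : F.Nonempty)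
    (𝒟 : Finset ((Fin m → (Fin n → Bool) × Bool) → Bool)) (h𝒟 : 𝒟.Nonempty) :
    (∃ S : Multiset ((Fin m → (Fin n → Bool) × Bool) → Bool),
        (∀ D ∈ S, D ∈ 𝒟) ∧
        1 ≤ Multiset.card S ∧
        Multiset.card S ≤ ⌈32 * s ^ 2 * Real.log F.card⌉₊ + 1 ∧
        ∀ f ∈ F, (S.map (fun D => adv f D)).sum ≥ (Multiset.card S : ℝ) / (8 * s)) ∨
    (∃ T : Multiset ((Fin n → Bool) → Bool),
        (∀ f ∈ T, f ∈ F) ∧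
        1 ≤ Multiset.card T ∧
        Multiset.card T ≤ ⌈8 * s ^ 2 * Real.log 𝒟.card⌉₊ + 1 ∧
        ∀ D ∈ 𝒟, (T.map (fun f => adv f D)).sum ≤ (Multiset.card T : ℝ) / (2 * s)) := by
  have := hF.coe_sort
  have := h𝒟.coe_sort
  have hs₀ : 0 < s := by linarith
  let A : Matrix F 𝒟 ℝ := of fun f D => adv f.1 D.1
  obtain ⟨p, hp, q, hq, hpq⟩ := A.exists_vecMul_le_mulVec_of_mem_stdSimplex
  by_cases hlearn : ∀ f, 1 / (4 * s) ≤ (A *ᵥ q) f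
  · left
    obtain ⟨S, hS𝒟, hcard, hS⟩ := exists_multiset_sum_map_ge adv adv_mem_Icc hq
      (a := 32 * s ^ 2) (t := 1 / (8 * s)) (by positivity) (by field_simp; ring)
      fun f hf => hlearn ⟨f, hf⟩
    refine ⟨S, hS𝒟, by omega, hcard.le, fun f hf => (hS f hf).trans' (le_of_eq ?_)⟩
    field_simp
    ring
  · right
    push Not at hlearn
    obtain ⟨f₀, hf₀⟩ := hlearn
    have hp𝒟 (D : 𝒟) : ∑ f : F, adv f.1 D.1 * p f ≤ 1 / (4 * s) := by
      rw [← mulVec_transpose] at hpq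
      exact (hpq f₀ D).trans hf₀.le
    obtain ⟨T, hTF, hcard, hT⟩ := exists_multiset_sum_map_le (fun D f => adv f D)
      (fun D f => adv_mem_Icc f D) hp (a := 8 * s ^ 2) (t := 1 / (4 * s)) (by positivity)
      (by field_simp; ring) fun D hD => hp𝒟 ⟨D, hD⟩
    refine ⟨T, hTF, by omega, hcard.le, fun D hD => (hT D hD).trans_eq ?_⟩
    field_simp
    ring

theorem stmt8 {n m : ℕ} (hn : 1 ≤ n) (hm : 1 ≤ m) (s : ℝ) (hs : 1 ≤ s)
    (F : Finset ((Fin n → Bool) → Bool)) (hF : F.Nonempty)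
    (𝒟 : Finset ((Fin m → (Fin n → Bool) × Bool) → Bool)) (h𝒟 : 𝒟.Nonempty) :
    (∃ S : Multiset ((Fin m → (Fin n → Bool) × Bool) → Bool),
        (∀ D ∈ S, D ∈ 𝒟) ∧
        1 ≤ Multiset.card S ∧
        Multiset.card S ≤ ⌈32 * s ^ 2 * Real.log F.card⌉₊ + 1 ∧
        ∀ f ∈ F, (S.map (fun D => adv f D)).sum ≥ (Multiset.card S : ℝ) / (8 * s)) ∨
    (∃ T : Multiset ((Fin n → Bool) → Bool),
        (∀ f ∈ T, f ∈ F) ∧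
        1 ≤ Multiset.card T ∧
        Multiset.card T ≤ ⌈8 * s ^ 2 * Real.log 𝒟.card⌉₊ + 1 ∧
        ∀ D ∈ 𝒟, (T.map (fun f => adv f D)).sum ≤ (Multiset.card T : ℝ) / (2 * s)) :=
  stmt8_general s hs F hF 𝒟 h𝒟
end

section
/- (Existence of Nisan–Wigderson designs.) For all natural numbers n ≥ 2 and d ≥ 2, there exist a natural number m with n^(2d) ≤ m ≤ 2·n^(2d) and a function J : Fin (2^n) → Finset (Fin m) such that J is injective, (J i).card = n^d for every i, and (J i ∩ J i').card ≤ n for all i ≠ i'. -/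
/-!
Let `N = n ^ d` and pick a prime `p` with `N < p ≤ 2N` (Bertrand). Index the sets by polynomials
of degree at most `n` over `𝔽_p`, of which there are `p ^ (n + 1) ≥ 2 ^ n`, and send `P` to its
graph `{(x, P x) : x < N}` inside `[N] × 𝔽_p`, a ground set of size `N p ∈ [N², 2N²]`. Distinct
polynomials of degree at most `n` agree on at most `n` points, so two graphs meet in at most `n`
points; since `n < N`, distinct polynomials also have distinct graphs.
-/

open Finset Polynomial

def IsNWDesign {κ α : Type*} [DecidableEq α] (ℓ k : ℕ) (J : κ → Finset α) : Prop :=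
  Function.Injective J ∧ (∀ i, #(J i) = k) ∧ ∀ i i', i ≠ i' → #(J i ∩ J i') ≤ ℓ

namespace IsNWDesign

variable {κ κ' α β : Type*} [DecidableEq α] [DecidableEq β] {ℓ k : ℕ} {J : κ → Finset α}

theorem of_card_inter (hk : ∀ i, #(J i) = k) (hℓ : ∀ i i', i ≠ i' → #(J i ∩ J i') ≤ ℓ)
    (hℓk : ℓ < k) : IsNWDesign ℓ k J := by
  refine ⟨fun i i' h => ?_, hk, hℓ⟩
  by_contra hii
  have := hℓ i i' hii
  rw [h, inter_self, hk] at this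
  omega

theorem comp_embedding (hJ : IsNWDesign ℓ k J) (g : κ' ↪ κ) : IsNWDesign ℓ k (J ∘ g) :=
  ⟨hJ.1.comp g.injective, fun i => hJ.2.1 (g i),
    fun i i' hii => hJ.2.2 (g i) (g i') (g.injective.ne hii)⟩

theorem map (hJ : IsNWDesign ℓ k J) (e : α ↪ β) : IsNWDesign ℓ k fun i => (J i).map e :=
  ⟨(map_injective e).comp hJ.1, fun i => by rw [card_map, hJ.2.1],
    fun i i' hii => by rw [← map_inter, card_map]; exact hJ.2.2 i i' hii⟩

end IsNWDesign

namespace Finset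

variable {ι β : Type*} [Fintype ι]

def graph (f : ι → β) : Finset (ι × β) :=
  univ.map ⟨fun x => (x, f x), fun _ _ h => congrArg Prod.fst h⟩

theorem card_graph (f : ι → β) : #(graph f) = Fintype.card ι := by
  rw [graph, card_map, card_univ]

theorem mem_graph {f : ι → β} {p : ι × β} : p ∈ graph f ↔ f p.1 = p.2 := by
  obtain ⟨x, y⟩ := p
  simp only [graph, mem_map, mem_univ, true_and]
  constructor
  · rintro ⟨a, h⟩
    obtain ⟨rfl, rfl⟩ := Prod.mk.inj h
    rfl
  · rintro rfl
    exact ⟨x, rfl⟩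

theorem card_graph_inter_graph [DecidableEq ι] [DecidableEq β] (f g : ι → β) :
    #(graph f ∩ graph g) = #{x | f x = g x} := by
  have : graph f ∩ graph g = (graph f).filter fun p => f p.1 = g p.1 := by
    ext p
    simp only [mem_inter, mem_filter, mem_graph]
    grind
  rw [this, graph, filter_map, card_map]
  rfl

end Finset

theorem Polynomial.card_filter_eval_eq_lt {R : Type*} [CommRing R] [IsDomain R] [DecidableEq R]
    {f g : R[X]} (hfg : f ≠ g) {k : ℕ} (hdeg : (f - g).degree < k) (s : Finset R) :
    #{x ∈ s | f.eval x = g.eval x} < k := by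
  by_contra! hk
  exact hfg <| eq_of_degree_sub_lt_of_eval_finset_eq _ (hdeg.trans_le (by exact_mod_cast hk))
    fun x hx => (mem_filter.mp hx).2

theorem isNWDesign_graph_eval {F ι : Type*} [Field F] [DecidableEq F] [Fintype ι]
    [DecidableEq ι] (e : ι ↪ F) {n : ℕ} (hn : n < Fintype.card ι) :
    IsNWDesign n (Fintype.card ι) fun P : degreeLT F (n + 1) =>
      graph fun x => (P : F[X]).eval (e x) := by
  refine .of_card_inter (fun P => card_graph _) (fun P Q hPQ => ?_) hn
  have hdeg : ((P : F[X]) - Q).degree < ↑(n + 1) := mem_degreeLT.mp (sub_mem P.2 Q.2)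
  have := card_filter_eval_eq_lt (Subtype.coe_injective.ne hPQ) hdeg (univ.map e)
  rw [filter_map, card_map] at this
  rw [card_graph_inter_graph]
  exact Nat.lt_succ_iff.mp this

theorem stmt9 (n d : ℕ) (hn : 2 ≤ n) (hd : 2 ≤ d) :
    ∃ m : ℕ, n ^ (2 * d) ≤ m ∧ m ≤ 2 * n ^ (2 * d) ∧
      ∃ J : Fin (2 ^ n) → Finset (Fin m),
        Function.Injective J ∧
        (∀ i, (J i).card = n ^ d) ∧
        (∀ i i', i ≠ i' → (J i ∩ J i').card ≤ n) := by
  set N := n ^ d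
  have hnN : n < N := lt_self_pow₀ hn hd
  obtain ⟨p, hp, hNp, hp2N⟩ := Nat.exists_prime_lt_and_le_two_mul N (by omega)
  have : Fact p.Prime := ⟨hp⟩
  have hNN : N * N = n ^ (2 * d) := by rw [← pow_add, two_mul]
  refine ⟨N * p, hNN ▸ Nat.mul_le_mul_left N hNp.le, by nlinarith, ?_⟩
  obtain ⟨points⟩ : Nonempty (Fin N ↪ ZMod p) :=
    Function.Embedding.nonempty_of_card_le (by simpa using hNp.le)
  obtain ⟨coeffs⟩ : Nonempty (Fin (2 ^ n) ↪ (Fin (n + 1) → ZMod p)) :=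
    Function.Embedding.nonempty_of_card_le <| by
      simpa using (Nat.pow_le_pow_left hp.two_le n).trans (Nat.pow_le_pow_right hp.pos n.le_succ)
  have hdesign := ((isNWDesign_graph_eval points (by simpa using hnN)).comp_embedding
    (coeffs.trans (degreeLTEquiv _ _).symm.toEquiv.toEmbedding)).map
    (Fintype.equivFinOfCardEq (α := Fin N × ZMod p) (n := N * p) (by simp)).toEmbedding
  simp only [Fintype.card_fin] at hdesign
  exact ⟨_, hdesign⟩
end
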